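/- arXiv:1306.5837 — 2 statements merged into one kernel-verified Lean document; each statement's English description precedes it below -/
import Mathlib

section
/- Let ρ ∈ (0,1), u ∈ C(ℝ² \ {0}) homogeneous of degree −ρ. If the mean-value transform ǔ(x) = (1/2π)∫_{S¹} u(x−ω)dω vanishes for every x ∈ ℝ² (with |x| ≠ 1), then u(x) = 0 for every x ∈ ℝ² \ {0}. -/
/-! By homogeneity, `mvt u (ε⁻¹ • x)` is `ε ^ ρ` times the mean of `u` over the circle of radius `ε`
about `x`. For `x ≠ 0` and small `ε > 0` the vanishing of `mvt` makes that mean zero, while by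
continuity of `u` at `x` it tends to `u x` as `ε → 0⁺`. -/

open MeasureTheory Real Filter Topology

/-- The mean-value transform `ǔ(x) = (1/2π) ∫_{S¹} u(x-ω) dω`. -/
noncomputable def mvt (u : ℝ × ℝ → ℝ) (x : ℝ × ℝ) : ℝ :=
  (1 / (2 * Real.pi)) * ∫ θ in (0 : ℝ)..(2 * Real.pi), u (x - (Real.cos θ, Real.sin θ))

theorem tendsto_intervalIntegral_comp_sub_smul {E F : Type*} [NormedAddCommGroup E]
    [NormedSpace ℝ E] [NormedAddCommGroup F] [NormedSpace ℝ F] [CompleteSpace F]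
    {u : E → F} {s : Set E} {x : E} (hs : s ∈ 𝓝 x) (hu : ContinuousOn u s) {γ : ℝ → E}
    (hγ : Continuous γ) (hγ_le : ∀ θ, ‖γ θ‖ ≤ 1) (a b : ℝ) :
    Tendsto (fun ε : ℝ => ∫ θ in a..b, u (x - ε • γ θ)) (𝓝 0) (𝓝 ((b - a) • u x)) := by
  have hux : ContinuousAt u x := hu.continuousAt hs
  obtain ⟨δ, hδ, hball⟩ : ∃ δ > 0, ∀ y ∈ Metric.ball x δ, y ∈ s ∧ ‖u y‖ < ‖u x‖ + 1 :=
    Metric.eventually_nhds_iff_ball.mp <|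
      Filter.Eventually.and hs (hux.norm.eventually (gt_mem_nhds (lt_add_one ‖u x‖)))
  have hmem : ∀ ε ∈ Metric.ball (0 : ℝ) δ, ∀ θ, x - ε • γ θ ∈ Metric.ball x δ := by
    intro ε hε θ
    rw [Metric.mem_ball, dist_eq_norm, sub_sub_cancel_left, norm_neg, norm_smul]
    rw [Metric.mem_ball, dist_zero_right] at hε
    exact (mul_le_of_le_one_right (norm_nonneg ε) (hγ_le θ)).trans_lt hε
  rw [← intervalIntegral.integral_const]
  refine intervalIntegral.tendsto_integral_filter_of_dominated_convergence (fun _ => ‖u x‖ + 1)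
    ?_ ?_ intervalIntegrable_const ?_
  · filter_upwards [Metric.ball_mem_nhds 0 hδ] with ε hε
    exact (hu.comp_continuous (by fun_prop) fun θ => (hball _ (hmem ε hε θ)).1)
      |>.aestronglyMeasurable
  · filter_upwards [Metric.ball_mem_nhds 0 hδ] with ε hε
    exact ae_of_all _ fun θ _ => (hball _ (hmem ε hε θ)).2.le
  · refine ae_of_all _ fun θ _ => hux.tendsto.comp ?_
    have hcont : Continuous fun ε : ℝ => x - ε • γ θ := by fun_prop
    simpa using hcont.tendsto 0

theorem norm_cos_sin_le_one (θ : ℝ) : ‖((cos θ, sin θ) : ℝ × ℝ)‖ ≤ 1 :=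
  max_le (by simpa using abs_cos_le_one θ) (by simpa using abs_sin_le_one θ)

theorem sq_add_sq_pos {x : ℝ × ℝ} (hx : x ≠ 0) : 0 < x.1 ^ 2 + x.2 ^ 2 := by
  rcases x with ⟨a, b⟩
  by_cases ha : a = 0
  · have hb : b ≠ 0 := by simpa [ha] using hx
    positivity
  · positivity

theorem sub_smul_cos_sin_ne_zero {x : ℝ × ℝ} {ε : ℝ} (hx : x.1 ^ 2 + x.2 ^ 2 ≠ ε ^ 2) (θ : ℝ) :
    x - ε • ((cos θ, sin θ) : ℝ × ℝ) ≠ 0 := by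
  intro h
  rw [sub_eq_zero] at h
  apply hx
  simp only [h, Prod.smul_fst, Prod.smul_snd, smul_eq_mul]
  linear_combination ε ^ 2 * sin_sq_add_cos_sq θ

theorem inv_smul_sq_add_sq_ne_one {x : ℝ × ℝ} {ε : ℝ} (hε : ε ≠ 0)
    (hx : x.1 ^ 2 + x.2 ^ 2 ≠ ε ^ 2) : (ε⁻¹ • x).1 ^ 2 + (ε⁻¹ • x).2 ^ 2 ≠ 1 := by
  intro h
  apply hx
  simp only [Prod.smul_fst, Prod.smul_snd, smul_eq_mul] at h
  field_simp at h
  linarith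

theorem mvt_inv_smul {ρ : ℝ} {u : ℝ × ℝ → ℝ}
    (hhom : ∀ t : ℝ, 0 < t → ∀ x : ℝ × ℝ, x ≠ 0 → u (t • x) = t ^ (-ρ) * u x)
    {ε : ℝ} (hε : 0 < ε) {x : ℝ × ℝ} (hx : x.1 ^ 2 + x.2 ^ 2 ≠ ε ^ 2) :
    mvt u (ε⁻¹ • x) =
      ε ^ ρ * (1 / (2 * π) * ∫ θ in (0 : ℝ)..(2 * π), u (x - ε • (cos θ, sin θ))) := by
  rw [mvt, mul_left_comm, ← intervalIntegral.integral_const_mul (ε ^ ρ)]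
  congr 1
  refine intervalIntegral.integral_congr fun θ _ => ?_
  rw [show ε⁻¹ • x - (cos θ, sin θ) = ε⁻¹ • (x - ε • (cos θ, sin θ)) by
      rw [smul_sub, inv_smul_smul₀ hε.ne'],
    hhom _ (inv_pos.mpr hε) _ (sub_smul_cos_sin_ne_zero hx θ), Real.inv_rpow hε.le,
    ← Real.rpow_neg hε.le, neg_neg]

theorem mvt_injective_general (ρ : ℝ)
    (u : ℝ × ℝ → ℝ) (hu : ContinuousOn u {(0 : ℝ × ℝ)}ᶜ)
    (hhom : ∀ t : ℝ, 0 < t → ∀ x : ℝ × ℝ, x ≠ 0 → u (t • x) = t ^ (-ρ) * u x)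
    (hvanish : ∀ x : ℝ × ℝ, x.1 ^ 2 + x.2 ^ 2 ≠ 1 → mvt u x = 0) :
    ∀ x : ℝ × ℝ, x ≠ 0 → u x = 0 := by
  intro x hx
  have hmean := tendsto_intervalIntegral_comp_sub_smul (isOpen_compl_singleton.mem_nhds hx) hu
    (by fun_prop : Continuous fun θ : ℝ => ((cos θ, sin θ) : ℝ × ℝ)) norm_cos_sin_le_one 0 (2 * π)
  have hsmall : ∀ᶠ ε : ℝ in 𝓝[>] 0, 0 < ε ∧ ε ^ 2 < x.1 ^ 2 + x.2 ^ 2 := by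
    refine Filter.Eventually.and self_mem_nhdsWithin (nhdsWithin_le_nhds ?_)
    exact (continuous_pow 2).tendsto' 0 0 (zero_pow two_ne_zero) |>.eventually
      (gt_mem_nhds (sq_add_sq_pos hx))
  have hzero : ∀ᶠ ε : ℝ in 𝓝[>] 0, ∫ θ in (0 : ℝ)..(2 * π), u (x - ε • (cos θ, sin θ)) = 0 := by
    filter_upwards [hsmall] with ε ⟨hε, hεx⟩
    have h := hvanish _ (inv_smul_sq_add_sq_ne_one hε.ne' hεx.ne')
    rw [mvt_inv_smul hhom hε hεx.ne'] at h
    simpa [(rpow_pos_of_pos hε ρ).ne', pi_ne_zero] using h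
  have h2π : (2 * π - 0) • u x = 0 :=
    tendsto_nhds_unique (hmean.mono_left nhdsWithin_le_nhds)
      (tendsto_const_nhds.congr' (hzero.mono fun _ h => h.symm))
  simpa [pi_ne_zero] using h2π

/-- injectivity of the circular mean-value transform on continuous
functions homogeneous of degree `-ρ`, `ρ ∈ (0,1)`. -/
theorem mvt_injective (ρ : ℝ) (hρ0 : 0 < ρ) (hρ1 : ρ < 1)
    (u : ℝ × ℝ → ℝ) (hu : ContinuousOn u {(0 : ℝ × ℝ)}ᶜ)
    (hhom : ∀ t : ℝ, 0 < t → ∀ x : ℝ × ℝ, x ≠ 0 → u (t • x) = t ^ (-ρ) * u x)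
    (hvanish : ∀ x : ℝ × ℝ, x.1 ^ 2 + x.2 ^ 2 ≠ 1 → mvt u x = 0) :
    ∀ x : ℝ × ℝ, x ≠ 0 → u x = 0 :=
  mvt_injective_general ρ u hu hhom hvanish
end

section
/- Let X be a separable Hilbert space and T a compact self-adjoint operator on X with singular values s_j(T) (non-increasing). Suppose s_j(T) ≤ C j^{-ρ/2} for all j ≥ 1 (some C > 0, ρ ∈ (0,1)) and s_1(T) ≤ A for some A ∈ (0, C]. Then for every ℓ > 2/ρ and every N ∈ ℕ, Σ_{j=1}^∞ s_j(T)^ℓ ≤ A^{ℓ − 2/ρ} C^{2/ρ} Σ_{j=1}^N j^{-1} + C^ℓ Σ_{j=N+1}^∞ j^{-ℓρ/2} ≤ const·(A^{ℓ−2/ρ}(1 + ln N) + N^{1 − ℓρ/2}) with a constant depending only on C, ρ, ℓ. -/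
/-!
Split `Σ_j s_j^ℓ` at `N`. On the head, `s_j^ℓ = s_j^{ℓ-2/ρ} s_j^{2/ρ} ≤ s_1^{ℓ-2/ρ} · C^{2/ρ} j⁻¹`,
since the exponent `2/ρ` turns the decay `j^{-ρ/2}` into the harmonic weight `j⁻¹`; this costs
`A^{ℓ-2/ρ} C^{2/ρ}(1 + ln N)`. On the tail the decay bound alone gives `C^ℓ Σ_{j>N} j^{-ℓρ/2}`,
and since `ℓρ/2 > 1` the integral test bounds this by `C^ℓ N^{1-ℓρ/2}/(ℓρ/2 - 1)`.
-/

/-- The `j`-th approximation number (= singular number, for operators on a Hilbert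
space) of `T`, for `j ≥ 1`: the distance from `T` to operators of rank `< j`. -/
noncomputable def singNum {X : Type*} [NormedAddCommGroup X] [InnerProductSpace ℂ X]
    (T : X →L[ℂ] X) (j : ℕ) : ℝ :=
  sInf { r : ℝ | ∃ F : X →L[ℂ] X,
    FiniteDimensional ℂ (LinearMap.range (F : X →ₗ[ℂ] X)) ∧
    Module.finrank ℂ (LinearMap.range (F : X →ₗ[ℂ] X)) < j ∧ r = ‖T - F‖ }

open Finset Real

section singNum

variable {X : Type*} [NormedAddCommGroup X] [InnerProductSpace ℂ X]

lemma singNum_nonneg (T : X →L[ℂ] X) (j : ℕ) : 0 ≤ singNum T j :=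
  Real.sInf_nonneg fun _ ⟨_, _, _, hr⟩ => hr ▸ norm_nonneg _

lemma singNum_le_singNum_of_le (T : X →L[ℂ] X) {j k : ℕ} (hj : 1 ≤ j) (hjk : j ≤ k) :
    singNum T k ≤ singNum T j := by
  have hzero : ((0 : X →L[ℂ] X) : X →ₗ[ℂ] X) = 0 := rfl
  refine csInf_le_csInf ⟨0, fun _ ⟨_, _, _, hr⟩ => hr ▸ norm_nonneg _⟩
    ⟨_, 0, ?_, ?_, rfl⟩ fun r ⟨F, hfin, hrank, hr⟩ => ⟨F, hfin, hrank.trans_le hjk, hr⟩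
  · rw [hzero, LinearMap.range_zero]
    infer_instance
  · rwa [hzero, LinearMap.range_zero, finrank_bot]

end singNum

lemma rpow_le_mul_rpow_of_le_mul_rpow {x C n a p : ℝ} (hx : 0 ≤ x) (hC : 0 ≤ C) (hn : 0 ≤ n)
    (hp : 0 ≤ p) (h : x ≤ C * n ^ a) : x ^ p ≤ C ^ p * n ^ (a * p) :=
  calc x ^ p ≤ (C * n ^ a) ^ p := rpow_le_rpow hx h hp
    _ = C ^ p * n ^ (a * p) := by rw [mul_rpow hC (rpow_nonneg hn a), ← rpow_mul hn]

lemma rpow_le_of_le_of_le_mul_rpow {x A C n ρ ℓ : ℝ} (hx : 0 ≤ x) (hC : 0 ≤ C) (hn : 0 ≤ n)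
    (hρ : 0 < ρ) (hℓ : 2 / ρ ≤ ℓ) (hA : x ≤ A) (hdecay : x ≤ C * n ^ (-ρ / 2)) :
    x ^ ℓ ≤ A ^ (ℓ - 2 / ρ) * C ^ (2 / ρ) * n⁻¹ := by
  have hq : 0 ≤ 2 / ρ := by positivity
  have hsplit : x ^ ℓ = x ^ (ℓ - 2 / ρ) * x ^ (2 / ρ) := by
    rw [← rpow_add_of_nonneg hx (sub_nonneg.2 hℓ) hq, sub_add_cancel]
  have hharmonic : x ^ (2 / ρ) ≤ C ^ (2 / ρ) * n⁻¹ := by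
    have := rpow_le_mul_rpow_of_le_mul_rpow hx hC hn hq hdecay
    rwa [show -ρ / 2 * (2 / ρ) = -1 by field_simp, rpow_neg_one] at this
  rw [hsplit, mul_assoc]
  exact mul_le_mul (rpow_le_rpow hx hA (sub_nonneg.2 hℓ)) hharmonic (by positivity)
    (rpow_nonneg (hx.trans hA) _)

lemma tsum_natCast_add_rpow_neg_le {s : ℝ} (hs : 1 < s) {N : ℕ} (hN : 0 < N) :
    ∑' j : ℕ, ((N + j + 1 : ℕ) : ℝ) ^ (-s) ≤ (N : ℝ) ^ (1 - s) / (s - 1) := by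
  have hN' : (0 : ℝ) < N := Nat.cast_pos.2 hN
  refine tsum_le_of_sum_range_le (fun _ => by positivity) fun n => ?_
  have hanti : AntitoneOn (fun x : ℝ => x ^ (-s)) (Set.Icc (N : ℝ) (N + n)) :=
    fun x hx y _ hxy => rpow_le_rpow_of_nonpos (hN'.trans_le hx.1) hxy (by linarith)
  have hzero : (0 : ℝ) ∉ Set.uIcc (N : ℝ) (N + n) := by
    rw [Set.uIcc_of_le (le_add_of_nonneg_right n.cast_nonneg)]
    exact fun h => hN'.not_ge h.1
  calc ∑ i ∈ range n, ((N + i + 1 : ℕ) : ℝ) ^ (-s)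
      = ∑ i ∈ range n, ((N : ℝ) + (i + 1 : ℕ)) ^ (-s) := by push_cast; simp only [add_assoc]
    _ ≤ ∫ x in (N : ℝ)..N + n, x ^ (-s) := hanti.sum_le_integral
    _ = ((N : ℝ) ^ (1 - s) - ((N : ℝ) + n) ^ (1 - s)) / (s - 1) := by
      rw [integral_rpow (Or.inr ⟨by linarith, hzero⟩), neg_add_eq_sub, ← neg_sub s 1,
        div_neg, ← neg_div, neg_sub]
    _ ≤ (N : ℝ) ^ (1 - s) / (s - 1) := by
      gcongr
      exact sub_le_self _ (by positivity)

theorem tsum_rpow_le_of_le_of_le_mul_rpow {g : ℕ → ℝ} {A C ρ ℓ : ℝ} (hC : 0 ≤ C) (hρ : 0 < ρ)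
    (hℓ : 2 / ρ < ℓ) (hg : ∀ j, 0 ≤ g j) (hgA : ∀ j, g j ≤ A)
    (hgC : ∀ j, g j ≤ C * ((j + 1 : ℕ) : ℝ) ^ (-ρ / 2)) (N : ℕ) :
    ∑' j, g j ^ ℓ ≤ A ^ (ℓ - 2 / ρ) * C ^ (2 / ρ) * ∑ j ∈ Icc 1 N, (j : ℝ)⁻¹
      + C ^ ℓ * ∑' j : ℕ, ((N + j + 1 : ℕ) : ℝ) ^ (-(ℓ * ρ / 2)) := by
  have hℓ0 : 0 ≤ ℓ := (div_pos two_pos hρ).le.trans hℓ.le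
  have hs : 1 < ℓ * ρ / 2 := by
    rw [div_lt_iff₀ hρ] at hℓ
    linarith
  have hdecay (j : ℕ) : g j ^ ℓ ≤ C ^ ℓ * ((j + 1 : ℕ) : ℝ) ^ (-(ℓ * ρ / 2)) := by
    convert rpow_le_mul_rpow_of_le_mul_rpow (hg j) hC (Nat.cast_nonneg _) hℓ0 (hgC j) using 3
    ring
  have hsummable : Summable fun j : ℕ => ((j + 1 : ℕ) : ℝ) ^ (-(ℓ * ρ / 2)) := by
    exact_mod_cast (summable_nat_add_iff 1).2 (summable_nat_rpow.2 (by linarith))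
  have hg_summable : Summable fun j => g j ^ ℓ :=
    .of_nonneg_of_le (fun j => rpow_nonneg (hg j) ℓ) hdecay (hsummable.mul_left _)
  have htail_summable : Summable fun j : ℕ => ((N + j + 1 : ℕ) : ℝ) ^ (-(ℓ * ρ / 2)) :=
    ((summable_nat_add_iff N).2 hsummable).congr fun j => by rw [Nat.add_comm j N]
  have hhead : ∑ j ∈ range N, g j ^ ℓ ≤ A ^ (ℓ - 2 / ρ) * C ^ (2 / ρ) * ∑ j ∈ Icc 1 N, (j : ℝ)⁻¹ := by
    rw [← Ico_add_one_right_eq_Icc, sum_Ico_eq_sum_range, mul_sum]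
    refine sum_le_sum fun j _ => ?_
    simpa [add_comm] using
      rpow_le_of_le_of_le_mul_rpow (hg j) hC (Nat.cast_nonneg _) hρ hℓ.le (hgA j) (hgC j)
  have htail : ∑' j, g (j + N) ^ ℓ ≤ C ^ ℓ * ∑' j : ℕ, ((N + j + 1 : ℕ) : ℝ) ^ (-(ℓ * ρ / 2)) := by
    rw [← tsum_mul_left]
    refine Summable.tsum_le_tsum (fun j => ?_) ((summable_nat_add_iff N).2 hg_summable)
      (htail_summable.mul_left _)
    rw [Nat.add_comm N j]
    exact hdecay (j + N)
  rw [← hg_summable.sum_add_tsum_nat_add N]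
  exact add_le_add hhead htail

lemma harmonic_add_tail_le {x a b s : ℝ} (hx : 0 ≤ x) (ha : 0 ≤ a) (hb : 0 ≤ b) (hs : 1 < s)
    {N : ℕ} (hN : 0 < N) :
    x * a * ∑ j ∈ Icc 1 N, (j : ℝ)⁻¹ + b * ∑' j : ℕ, ((N + j + 1 : ℕ) : ℝ) ^ (-s) ≤
      max a (b / (s - 1)) * (x * (1 + log N) + (N : ℝ) ^ (1 - s)) := by
  have hharmonic : ∑ j ∈ Icc 1 N, (j : ℝ)⁻¹ ≤ 1 + log N := by
    simpa [harmonic_eq_sum_Icc] using harmonic_le_one_add_log N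
  have hlog : 0 ≤ 1 + log N := by positivity
  calc x * a * ∑ j ∈ Icc 1 N, (j : ℝ)⁻¹ + b * ∑' j : ℕ, ((N + j + 1 : ℕ) : ℝ) ^ (-s)
      ≤ x * a * (1 + log N) + b * ((N : ℝ) ^ (1 - s) / (s - 1)) := by
        gcongr
        exact tsum_natCast_add_rpow_neg_le hs hN
    _ = a * (x * (1 + log N)) + b / (s - 1) * (N : ℝ) ^ (1 - s) := by ring
    _ ≤ max a (b / (s - 1)) * (x * (1 + log N)) + max a (b / (s - 1)) * (N : ℝ) ^ (1 - s) := by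
        gcongr
        exacts [le_max_left _ _, le_max_right _ _]
    _ = max a (b / (s - 1)) * (x * (1 + log N) + (N : ℝ) ^ (1 - s)) := (mul_add _ _ _).symm

theorem singular_value_splitting_general {X : Type*} [NormedAddCommGroup X]
    [InnerProductSpace ℂ X] [CompleteSpace X]
    (C ρ ℓ : ℝ) (hC : 0 < C) (hρ0 : 0 < ρ) (hℓ : 2 / ρ < ℓ) :
    ∃ K : ℝ, 0 < K ∧
      ∀ (T : X →L[ℂ] X), IsCompactOperator T → IsSelfAdjoint T →
      ∀ A : ℝ, 0 < A → A ≤ C →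
      (∀ j : ℕ, 1 ≤ j → singNum T j ≤ C * (j : ℝ) ^ (-ρ / 2)) →
      singNum T 1 ≤ A →
      ∀ N : ℕ, 1 ≤ N →
        (∑' j : ℕ, singNum T (j + 1) ^ ℓ) ≤
            A ^ (ℓ - 2 / ρ) * C ^ (2 / ρ) * (∑ j ∈ Finset.Icc 1 N, (j : ℝ)⁻¹)
              + C ^ ℓ * ∑' j : ℕ, ((N + j + 1 : ℕ) : ℝ) ^ (-(ℓ * ρ / 2)) ∧
        A ^ (ℓ - 2 / ρ) * C ^ (2 / ρ) * (∑ j ∈ Finset.Icc 1 N, (j : ℝ)⁻¹)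
              + C ^ ℓ * (∑' j : ℕ, ((N + j + 1 : ℕ) : ℝ) ^ (-(ℓ * ρ / 2))) ≤
          K * (A ^ (ℓ - 2 / ρ) * (1 + Real.log N) + (N : ℝ) ^ (1 - ℓ * ρ / 2)) := by
  have hs : 1 < ℓ * ρ / 2 := by
    rw [div_lt_iff₀ hρ0] at hℓ
    linarith
  refine ⟨max (C ^ (2 / ρ)) (C ^ ℓ / (ℓ * ρ / 2 - 1)), lt_max_of_lt_left (by positivity), ?_⟩
  intro T _ _ A hA _ hdecay hA1 N hN
  refine ⟨tsum_rpow_le_of_le_of_le_mul_rpow hC.le hρ0 hℓ (fun j => singNum_nonneg T _)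
    (fun j => (singNum_le_singNum_of_le T le_rfl (Nat.le_add_left 1 j)).trans hA1)
    (fun j => hdecay (j + 1) (Nat.le_add_left 1 j)) N, ?_⟩
  exact harmonic_add_tail_le (by positivity) (by positivity) (by positivity) hs hN

/-- the singular-value splitting estimate: if `s_j(T) ≤ C j^{-ρ/2}` and
`s_1(T) ≤ A ≤ C`, then for `ℓ > 2/ρ` and every `N ≥ 1`,
`Σ_j s_j(T)^ℓ ≤ A^{ℓ-2/ρ} C^{2/ρ} Σ_{j=1}^N j⁻¹ + C^ℓ Σ_{j>N} j^{-ℓρ/2}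
  ≤ K (A^{ℓ-2/ρ}(1+ln N) + N^{1-ℓρ/2})` with `K = K(C,ρ,ℓ)`. -/
theorem singular_value_splitting {X : Type*} [NormedAddCommGroup X]
    [InnerProductSpace ℂ X] [CompleteSpace X]
    (C ρ ℓ : ℝ) (hC : 0 < C) (hρ0 : 0 < ρ) (hρ1 : ρ < 1) (hℓ : 2 / ρ < ℓ) :
    ∃ K : ℝ, 0 < K ∧
      ∀ (T : X →L[ℂ] X), IsCompactOperator T → IsSelfAdjoint T →
      ∀ A : ℝ, 0 < A → A ≤ C →
      (∀ j : ℕ, 1 ≤ j → singNum T j ≤ C * (j : ℝ) ^ (-ρ / 2)) →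
      singNum T 1 ≤ A →
      ∀ N : ℕ, 1 ≤ N →
        (∑' j : ℕ, singNum T (j + 1) ^ ℓ) ≤
            A ^ (ℓ - 2 / ρ) * C ^ (2 / ρ) * (∑ j ∈ Finset.Icc 1 N, (j : ℝ)⁻¹)
              + C ^ ℓ * ∑' j : ℕ, ((N + j + 1 : ℕ) : ℝ) ^ (-(ℓ * ρ / 2)) ∧
        A ^ (ℓ - 2 / ρ) * C ^ (2 / ρ) * (∑ j ∈ Finset.Icc 1 N, (j : ℝ)⁻¹)
              + C ^ ℓ * (∑' j : ℕ, ((N + j + 1 : ℕ) : ℝ) ^ (-(ℓ * ρ / 2))) ≤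
          K * (A ^ (ℓ - 2 / ρ) * (1 + Real.log N) + (N : ℝ) ^ (1 - ℓ * ρ / 2)) :=
  singular_value_splitting_general C ρ ℓ hC hρ0 hℓ
end
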